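/- arXiv:2601.04014 — 3 statements merged into one kernel-verified Lean document; each statement's English description precedes it below -/
import Mathlib

section
/- Ramanujan's third order mock theta function ω(q) := Σ_{n≥0} q^{2n(n+1)} / (q;q^2)_{n+1}^2 satisfies the identity q·ω(q) = q · Σ_{n≥0} q^n / (q;q^2)_{n+1}. -/
open Finset

/-- Finite q-Pochhammer symbol `(a;q)_n`. -/
noncomputable def qPoch (a q : ℂ) (n : ℕ) : ℂ := ∏ j ∈ Finset.range n, (1 - a * q ^ j)

/-- Ramanujan's third order mock theta function `ω(q)`. -/
noncomputable def omegaMock (q : ℂ) : ℂ :=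
  ∑' n : ℕ, q ^ (2 * n * (n + 1)) / (qPoch q (q ^ 2) (n + 1)) ^ 2

open Filter Topology

section aux
variable {q : ℂ} (hq : ‖q‖ < 1)

lemma weier (s : Finset ℕ) (f : ℕ → ℝ) (h0 : ∀ i ∈ s, 0 ≤ f i) (h1 : ∀ i ∈ s, f i ≤ 1) :
    1 - ∑ i ∈ s, f i ≤ ∏ i ∈ s, (1 - f i) := by
  induction s using Finset.cons_induction with
  | empty => simp
  | cons a s ha ih =>
      rw [Finset.prod_cons, Finset.sum_cons]
      have ihs := ih (fun i hi => h0 i (Finset.mem_cons.mpr (Or.inr hi)))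
        (fun i hi => h1 i (Finset.mem_cons.mpr (Or.inr hi)))
      have hfa0 : 0 ≤ f a := h0 a (Finset.mem_cons_self a s)
      have hfa1 : f a ≤ 1 := h1 a (Finset.mem_cons_self a s)
      have hprod0 : (0:ℝ) ≤ ∏ i ∈ s, (1 - f i) :=
        Finset.prod_nonneg fun i hi => by linarith [h1 i (Finset.mem_cons.mpr (Or.inr hi))]
      have hsum0 : (0:ℝ) ≤ ∑ i ∈ s, f i :=
        Finset.sum_nonneg fun i hi => h0 i (Finset.mem_cons.mpr (Or.inr hi))
      nlinarith

include hq

lemma pow_small (k : ℕ) (hk : 1 ≤ k) : ‖q‖^k < 1 := by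
  calc ‖q‖^k ≤ ‖q‖^1 := pow_le_pow_of_le_one (norm_nonneg q) hq.le hk
    _ < 1 := by rwa [pow_one]

lemma norm_fac (j : ℕ) : ‖q * (q^2)^j‖ = ‖q‖^(2*j+1) := by
  rw [norm_mul, norm_pow, norm_pow]; ring

lemma poch_ne (m : ℕ) : qPoch q (q^2) m ≠ 0 := by
  unfold qPoch
  rw [Finset.prod_ne_zero_iff]
  intro j _ h
  have h1 : q * (q^2)^j = 1 := by linear_combination -h
  have : ‖q * (q^2)^j‖ < 1 := by rw [norm_fac hq j]; exact pow_small hq _ (by omega)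
  rw [h1] at this; simp at this

lemma poch_lower : ∃ c : ℝ, 0 < c ∧ ∀ m, c ≤ ‖qPoch q (q^2) m‖ := by
  have ha0 : (0:ℝ) ≤ ‖q‖ := norm_nonneg q
  have hfs : ∀ j : ℕ, ‖q‖^(2*j+1) < 1 := fun j => pow_small hq _ (by omega)
  have hfac0 : ∀ j : ℕ, (0:ℝ) ≤ 1 - ‖q‖^(2*j+1) := fun j => by linarith [hfs j]
  have hfacle1 : ∀ j : ℕ, 1 - ‖q‖^(2*j+1) ≤ 1 := fun j => by
    have := pow_nonneg ha0 (2*j+1); linarith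
  have hsum : Summable (fun j : ℕ => ‖q‖^(2*j+1)) := by
    have : Summable (fun j : ℕ => ‖q‖ * (‖q‖^2)^j) :=
      (summable_geometric_of_lt_one (by positivity) (by nlinarith)).mul_left ‖q‖
    exact this.congr fun j => by ring
  have htail : Tendsto (fun i => ∑' k : ℕ, ‖q‖^(2*(k+i)+1)) atTop (𝓝 0) :=
    tendsto_sum_nat_add (fun j => ‖q‖^(2*j+1))
  obtain ⟨J, hJ⟩ := (htail.eventually (eventually_le_nhds (by norm_num : (0:ℝ) < 1/2))).exists
  refine ⟨(∏ j ∈ Finset.range J, (1 - ‖q‖^(2*j+1))) * (1/2), ?_, ?_⟩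
  · exact mul_pos (Finset.prod_pos fun j _ => by linarith [hfs j]) (by norm_num)
  · intro m
    have hfac : ∀ j : ℕ, 1 - ‖q‖^(2*j+1) ≤ ‖1 - q * (q^2)^j‖ := by
      intro j
      calc 1 - ‖q‖^(2*j+1) = ‖(1:ℂ)‖ - ‖q * (q^2)^j‖ := by rw [norm_fac hq j]; simp
        _ ≤ ‖1 - q * (q^2)^j‖ := norm_sub_norm_le _ _
    have key : (∏ j ∈ Finset.range m, (1 - ‖q‖^(2*j+1))) ≤ ‖qPoch q (q^2) m‖ := by
      unfold qPoch
      rw [norm_prod]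
      exact Finset.prod_le_prod (fun j _ => hfac0 j) (fun j _ => hfac j)
    refine le_trans ?_ key
    rcases le_or_gt m J with hmJ | hmJ
    · have h2 : (∏ j ∈ Finset.range J, (1 - ‖q‖^(2*j+1)))
          ≤ ∏ j ∈ Finset.range m, (1 - ‖q‖^(2*j+1)) := by
        rw [← Finset.prod_range_mul_prod_Ico _ hmJ]
        exact mul_le_of_le_one_right (Finset.prod_nonneg fun j _ => hfac0 j)
          (Finset.prod_le_one (fun j _ => hfac0 j) (fun j _ => hfacle1 j))
      nlinarith [Finset.prod_nonneg (fun j (_ : j ∈ Finset.range J) => hfac0 j)]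
    · rw [← Finset.prod_range_mul_prod_Ico _ hmJ.le]
      apply mul_le_mul_of_nonneg_left _ (Finset.prod_nonneg (fun j _ => hfac0 j))
      have hW := weier (Finset.Ico J m) (fun j => ‖q‖^(2*j+1)) (fun i _ => by positivity)
        (fun i _ => by linarith [hfs i])
      have hsumJ : Summable (fun k : ℕ => ‖q‖^(2*(J+k)+1)) :=
        ((summable_nat_add_iff J).mpr hsum).congr fun k => by rw [Nat.add_comm k J]
      have hsle : ∑ i ∈ Finset.Ico J m, ‖q‖^(2*i+1) ≤ 1/2 := by
        have h3 : ∑ i ∈ Finset.Ico J m, ‖q‖^(2*i+1) ≤ ∑' k : ℕ, ‖q‖^(2*(J+k)+1) := by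
          rw [Finset.sum_Ico_eq_sum_range]
          exact Summable.sum_le_tsum _ (fun i _ => by positivity) hsumJ
        have h4 : (∑' k : ℕ, ‖q‖^(2*(J+k)+1)) = ∑' k : ℕ, ‖q‖^(2*(k+J)+1) :=
          tsum_congr fun k => by rw [Nat.add_comm J k]
        linarith [hJ]
      linarith
end aux

noncomputable def Gfun (q : ℂ) (k : ℕ) : ℂ :=
  ∑' n : ℕ, q ^ ((2*k+1)*n) / qPoch q (q^2) (n+k+1)

section main
variable {q : ℂ} (hq : ‖q‖ < 1)
include hq

lemma term_bound {c : ℝ} (hc : 0 < c) (hcm : ∀ m, c ≤ ‖qPoch q (q^2) m‖) (k n : ℕ) :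
    ‖q ^ ((2*k+1)*n) / qPoch q (q^2) (n+k+1)‖ ≤ c⁻¹ * ‖q‖^n := by
  rw [norm_div, norm_pow]
  have h1 : ‖q‖^((2*k+1)*n) ≤ ‖q‖^n :=
    pow_le_pow_of_le_one (norm_nonneg q) hq.le (by nlinarith)
  calc ‖q‖^((2*k+1)*n) / ‖qPoch q (q^2) (n+k+1)‖
      ≤ ‖q‖^n / c := div_le_div₀ (by positivity) h1 hc (hcm _)
    _ = c⁻¹ * ‖q‖^n := div_eq_inv_mul _ _

lemma G_summable (k : ℕ) :
    Summable (fun n : ℕ => q ^ ((2*k+1)*n) / qPoch q (q^2) (n+k+1)) := by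
  obtain ⟨c, hc, hcm⟩ := poch_lower hq
  exact Summable.of_norm_bounded (g := fun n => c⁻¹ * ‖q‖^n)
    ((summable_geometric_of_lt_one (norm_nonneg q) hq).mul_left _)
    (term_bound hq hc hcm k)

lemma G_norm_le : ∃ C : ℝ, 0 ≤ C ∧ ∀ k, ‖Gfun q k‖ ≤ C := by
  obtain ⟨c, hc, hcm⟩ := poch_lower hq
  have h1q : (0:ℝ) < 1 - ‖q‖ := by linarith
  refine ⟨c⁻¹ * (1 - ‖q‖)⁻¹, by positivity, fun k => ?_⟩
  calc ‖Gfun q k‖ ≤ ∑' n : ℕ, ‖q ^ ((2*k+1)*n) / qPoch q (q^2) (n+k+1)‖ :=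
        norm_tsum_le_tsum_norm ((G_summable hq k).norm)
    _ ≤ ∑' n : ℕ, c⁻¹ * ‖q‖^n := by
        apply Summable.tsum_le_tsum (term_bound hq hc hcm k) ((G_summable hq k).norm)
          ((summable_geometric_of_lt_one (norm_nonneg q) hq).mul_left _)
    _ = c⁻¹ * (1 - ‖q‖)⁻¹ := by
        rw [tsum_mul_left, tsum_geometric_of_lt_one (norm_nonneg q) hq]

lemma G_rec (k : ℕ) :
    (1 - q^(2*k+1)) * Gfun q k = 1 / qPoch q (q^2) (k+1) + q^(4*k+4) * Gfun q (k+1) := by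
  have hterm : ∀ n : ℕ,
      q ^ ((2*k+1)*(n+1)) / qPoch q (q^2) ((n+1)+k+1)
        = q^(2*k+1) * (q ^ ((2*k+1)*n) / qPoch q (q^2) (n+k+1))
          + q^(4*k+4) * (q ^ ((2*(k+1)+1)*n) / qPoch q (q^2) (n+(k+1)+1)) := by
    intro n
    have e1 : (n+1)+k+1 = (n+k+1)+1 := by omega
    have e2 : n+(k+1)+1 = (n+k+1)+1 := by omega
    rw [e1, e2]
    have hP : qPoch q (q^2) ((n+k+1)+1) = qPoch q (q^2) (n+k+1) * (1 - q*(q^2)^(n+k+1)) := by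
      unfold qPoch; rw [Finset.prod_range_succ]
    have h1 : qPoch q (q^2) (n+k+1) ≠ 0 := poch_ne hq _
    have h2 : qPoch q (q^2) ((n+k+1)+1) ≠ 0 := poch_ne hq _
    rw [hP] at h2 ⊢
    have h3 : (1 - q*(q^2)^(n+k+1)) ≠ 0 := by
      intro h; apply h2; rw [h, mul_zero]
    field_simp
    ring
  have hsplit : Gfun q k
      = q ^ ((2*k+1)*0) / qPoch q (q^2) (0+k+1)
        + ∑' n : ℕ, q ^ ((2*k+1)*(n+1)) / qPoch q (q^2) ((n+1)+k+1) := by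
    unfold Gfun
    exact Summable.tsum_eq_zero_add (G_summable hq k)
  have hS1 : Summable (fun n : ℕ => q^(2*k+1) * (q ^ ((2*k+1)*n) / qPoch q (q^2) (n+k+1))) :=
    (G_summable hq k).mul_left _
  have hS2 : Summable (fun n : ℕ =>
      q^(4*k+4) * (q ^ ((2*(k+1)+1)*n) / qPoch q (q^2) (n+(k+1)+1))) :=
    (G_summable hq (k+1)).mul_left _
  have htail : (∑' n : ℕ, q ^ ((2*k+1)*(n+1)) / qPoch q (q^2) ((n+1)+k+1))
      = q^(2*k+1) * Gfun q k + q^(4*k+4) * Gfun q (k+1) := by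
    rw [tsum_congr hterm, Summable.tsum_add hS1 hS2, tsum_mul_left, tsum_mul_left]
    rfl
  have h0 : q ^ ((2*k+1)*0) / qPoch q (q^2) (0+k+1) = 1 / qPoch q (q^2) (k+1) := by
    norm_num
  rw [h0, htail] at hsplit
  linear_combination hsplit
end main

section main2
variable {q : ℂ} (hq : ‖q‖ < 1)
include hq

lemma partial_sums (N : ℕ) :
    Gfun q 0 = (∑ k ∈ Finset.range N, q ^ (2*k*(k+1)) / (qPoch q (q^2) (k+1))^2)
      + q ^ (2*N*(N+1)) / qPoch q (q^2) N * Gfun q N := by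
  induction N with
  | zero => simp [qPoch]
  | succ N ih =>
    rw [Finset.sum_range_succ]
    have hA : qPoch q (q^2) N ≠ 0 := poch_ne hq N
    have hB : qPoch q (q^2) (N+1) ≠ 0 := poch_ne hq (N+1)
    have hP : qPoch q (q^2) (N+1) = qPoch q (q^2) N * (1 - q*(q^2)^N) := by
      unfold qPoch; rw [Finset.prod_range_succ]
    have hx : (1 - q*(q^2)^N) ≠ 0 := by
      intro h; apply hB; rw [hP, h, mul_zero]
    have hq2 : (1 - q^(2*N+1)) ≠ 0 := by
      intro h; apply hx
      have : q*(q^2)^N = q^(2*N+1) := by ring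
      rw [this, h]
    have hrec := G_rec hq N
    have step : q ^ (2*N*(N+1)) / qPoch q (q^2) N * Gfun q N
        = q ^ (2*N*(N+1)) / (qPoch q (q^2) (N+1))^2
          + q ^ (2*(N+1)*(N+2)) / qPoch q (q^2) (N+1) * Gfun q (N+1) := by
      have hq2' : q*(q^2)^N = q^(2*N+1) := by ring
      rw [hq2'] at hP hx
      rw [hP] at hrec ⊢
      field_simp at hrec ⊢
      linear_combination (q ^ (2*N*(N+1))) * hrec
    rw [ih, step]
    ring
end main2

section final
variable {q : ℂ} (hq : ‖q‖ < 1)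
include hq

lemma remainder_tendsto :
    Filter.Tendsto (fun N => q ^ (2*N*(N+1)) / qPoch q (q^2) N * Gfun q N)
      Filter.atTop (nhds 0) := by
  obtain ⟨c, hc, hcm⟩ := poch_lower hq
  obtain ⟨C, hC0, hC⟩ := G_norm_le hq
  apply squeeze_zero_norm (a := fun N => (c⁻¹ * C) * ‖q‖^N)
  · intro N
    rw [norm_mul, norm_div, norm_pow]
    have h1 : ‖q‖^(2*N*(N+1)) ≤ ‖q‖^N :=
      pow_le_pow_of_le_one (norm_nonneg q) hq.le (by nlinarith)
    have h3 : (0:ℝ) < ‖qPoch q (q^2) N‖ := lt_of_lt_of_le hc (hcm _)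
    calc ‖q‖^(2*N*(N+1)) / ‖qPoch q (q^2) N‖ * ‖Gfun q N‖
        ≤ (‖q‖^N / c) * C := by
          apply mul_le_mul (div_le_div₀ (by positivity) h1 hc (hcm _)) (hC N)
            (norm_nonneg _) (by positivity)
      _ = (c⁻¹ * C) * ‖q‖^N := by ring
  · simpa using (tendsto_pow_atTop_nhds_zero_of_lt_one (norm_nonneg q) hq).const_mul (c⁻¹ * C)

lemma w_summable :
    Summable (fun n : ℕ => q ^ (2*n*(n+1)) / (qPoch q (q^2) (n+1))^2) := by
  obtain ⟨c, hc, hcm⟩ := poch_lower hq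
  apply Summable.of_norm_bounded (g := fun n => (c⁻¹*c⁻¹) * ‖q‖^n)
    ((summable_geometric_of_lt_one (norm_nonneg q) hq).mul_left _)
  intro n
  rw [norm_div, norm_pow, norm_pow]
  have h1 : ‖q‖^(2*n*(n+1)) ≤ ‖q‖^n :=
    pow_le_pow_of_le_one (norm_nonneg q) hq.le (by nlinarith)
  have h3 : (0:ℝ) < ‖qPoch q (q^2) (n+1)‖ := lt_of_lt_of_le hc (hcm _)
  calc ‖q‖^(2*n*(n+1)) / ‖qPoch q (q^2) (n+1)‖^2
      ≤ ‖q‖^n / (c*c) := by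
        refine div_le_div₀ (by positivity) h1 (by positivity) ?_
        calc c * c ≤ ‖qPoch q (q^2) (n+1)‖ * ‖qPoch q (q^2) (n+1)‖ :=
              mul_le_mul (hcm _) (hcm _) hc.le (norm_nonneg _)
          _ = ‖qPoch q (q^2) (n+1)‖^2 := (sq _).symm
    _ = (c⁻¹*c⁻¹) * ‖q‖^n := by field_simp

lemma key_identity :
    (∑' n : ℕ, q ^ (2*n*(n+1)) / (qPoch q (q^2) (n+1))^2) = Gfun q 0 := by
  have h1 : Filter.Tendsto
      (fun N => ∑ k ∈ Finset.range N, q ^ (2*k*(k+1)) / (qPoch q (q^2) (k+1))^2)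
      Filter.atTop (nhds (Gfun q 0)) := by
    have h2 : ∀ N, ∑ k ∈ Finset.range N, q ^ (2*k*(k+1)) / (qPoch q (q^2) (k+1))^2
        = Gfun q 0 - q ^ (2*N*(N+1)) / qPoch q (q^2) N * Gfun q N := by
      intro N
      have := partial_sums hq N
      linear_combination -this
    simp only [h2]
    simpa using tendsto_const_nhds.sub (remainder_tendsto hq)
  exact tendsto_nhds_unique ((w_summable hq).hasSum.tendsto_sum_nat) h1
end final

/-- `q·ω(q) = q · Σ_{n≥0} q^n / (q;q^2)_{n+1}`. -/
theorem stmt2 (q : ℂ) (hq : ‖q‖ < 1) :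
    q * omegaMock q = q * ∑' n : ℕ, q ^ n / qPoch q (q ^ 2) (n + 1) := by
  have h1 : omegaMock q = Gfun q 0 := by
    rw [omegaMock]
    rw [← key_identity hq]
  have h2 : (∑' n : ℕ, q ^ n / qPoch q (q ^ 2) (n + 1)) = Gfun q 0 := by
    unfold Gfun
    apply tsum_congr
    intro n
    norm_num
  rw [h1, h2]
end

section
/- As k → ∞, the coefficients of F_{k,1}(q) converge coefficientwise to those of q·ω(q); more precisely, for every nonnegative integer N there is K such that for all k ≥ K the coefficients of q^n in F_{k,1}(q) and in q·ω(q) agree for all n ≤ N, where F_{k,1}(q) := Σ_{n≥0} (q^{2k-1};q^2)_n · q^{n+1} / (q;q^2)_{n+1} and ω(q) := Σ_{n≥0} q^{2n(n+1)} / (q;q^2)_{n+1}^2. -/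
open Finset

/-- `F_{k,1}(q) = Σ_{n≥0} (q^{2k-1};q^2)_n q^{n+1} / (q;q^2)_{n+1}`. -/
noncomputable def F (k : ℕ) (q : ℂ) : ℂ :=
  ∑' n : ℕ, qPoch (q ^ (2 * k - 1)) (q ^ 2) n * q ^ (n + 1) / qPoch q (q ^ 2) (n + 1)


noncomputable def rp (a Q : ℝ) (n : ℕ) : ℝ := ∏ j ∈ Finset.range n, (1 - a * Q ^ j)

lemma prod_one_sub_ge (f : ℕ → ℝ) (n : ℕ) (h0 : ∀ j, 0 ≤ f j) (h1 : ∀ j, f j ≤ 1) :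
    1 - ∑ j ∈ Finset.range n, f j ≤ ∏ j ∈ Finset.range n, (1 - f j) := by
  induction n with
  | zero => simp
  | succ n ih =>
    rw [Finset.sum_range_succ, Finset.prod_range_succ]
    have hP : 0 ≤ ∏ j ∈ Finset.range n, (1 - f j) :=
      Finset.prod_nonneg fun j _ => by linarith [h1 j]
    have hP1 : ∏ j ∈ Finset.range n, (1 - f j) ≤ 1 :=
      Finset.prod_le_one (fun j _ => by linarith [h1 j]) (fun j _ => by linarith [h0 j])
    nlinarith [h0 n, h1 n]

lemma geom_partial_le {Q : ℝ} (hQ : 0 ≤ Q) (hQ' : Q ≤ 1/2) (n : ℕ) :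
    ∑ j ∈ Finset.range n, Q ^ j ≤ 2 := by
  have h1 : Q ≠ 1 := by intro h; rw [h] at hQ'; norm_num at hQ'
  rw [geom_sum_eq h1]
  have hQn : 0 ≤ Q ^ n := pow_nonneg hQ n
  have hQn1 : Q ^ n ≤ 1 := pow_le_one₀ hQ (by linarith)
  rw [div_le_iff_of_neg (by linarith : Q - 1 < 0)]
  nlinarith

structure Dom (a Q : ℝ) : Prop where
  ha : 0 ≤ a
  ha' : a ≤ 1/4
  hQ : 0 ≤ Q
  hQ' : Q ≤ 1/2

namespace Dom

variable {a Q : ℝ} (h : Dom a Q)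
include h

lemma term_nonneg (j : ℕ) : 0 ≤ a * Q ^ j := mul_nonneg h.ha (pow_nonneg h.hQ j)

lemma term_le (j : ℕ) : a * Q ^ j ≤ 1/4 := by
  have hp : Q ^ j ≤ 1 := pow_le_one₀ h.hQ (by linarith [h.hQ'])
  nlinarith [h.ha, h.ha', pow_nonneg h.hQ j]

lemma rp_le_one (n : ℕ) : rp a Q n ≤ 1 :=
  Finset.prod_le_one (fun j _ => by linarith [h.term_le j])
    (fun j _ => by linarith [h.term_nonneg j])

lemma rp_ge (n : ℕ) : 1/2 ≤ rp a Q n := by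
  have hs : ∑ j ∈ Finset.range n, a * Q ^ j ≤ 1/2 := by
    rw [← Finset.mul_sum]
    nlinarith [geom_partial_le h.hQ h.hQ' n, h.ha, h.ha',
      Finset.sum_nonneg (fun j (_ : j ∈ Finset.range n) => pow_nonneg h.hQ j)]
  have := prod_one_sub_ge (fun j => a * Q ^ j) n h.term_nonneg
    (fun j => by simpa using le_trans (h.term_le j) (by norm_num))
  rw [rp]; linarith

lemma rp_pos (n : ℕ) : 0 < rp a Q n := lt_of_lt_of_le (by norm_num) (h.rp_ge n)

lemma rp_sub_one_abs (n : ℕ) : |rp a Q n - 1| ≤ 2 * a := by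
  have h1 : rp a Q n ≤ 1 := h.rp_le_one n
  have h2 : 1 - ∑ j ∈ Finset.range n, a * Q ^ j ≤ rp a Q n :=
    prod_one_sub_ge _ n h.term_nonneg
      (fun j => by simpa using le_trans (h.term_le j) (by norm_num))
  have hs : ∑ j ∈ Finset.range n, a * Q ^ j ≤ 2 * a := by
    rw [← Finset.mul_sum]
    nlinarith [geom_partial_le h.hQ h.hQ' n, h.ha]
  rw [abs_le]; constructor <;> nlinarith [h.ha]

end Dom

lemma rp_succ (a Q : ℝ) (n : ℕ) : rp a Q (n+1) = rp a Q n * (1 - a * Q ^ n) :=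
  Finset.prod_range_succ _ n

lemma rp_succ' (a Q : ℝ) (n : ℕ) : rp a Q (n+1) = (1 - a) * rp (a*Q) Q n := by
  rw [rp, Finset.prod_range_succ']
  simp [rp, mul_comm, mul_pow, pow_succ, mul_assoc, mul_left_comm]

noncomputable def Fr (b t Q : ℝ) : ℝ := ∑' n : ℕ, t ^ n / rp b Q (n+1)

lemma summable_aux {b t Q : ℝ} (h : Dom b Q) (ht0 : 0 ≤ t) (ht : t ≤ 1/2)
    (g : ℕ → ℕ) : Summable (fun n : ℕ => t ^ n / rp b Q (g n)) := by
  apply Summable.of_nonneg_of_le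
    (fun n => div_nonneg (pow_nonneg ht0 n) (h.rp_pos _).le) (fun n => ?_)
    ((summable_geometric_of_lt_one ht0 (by linarith)).mul_left 2)
  have h2 := h.rp_ge (g n)
  have hp := h.rp_pos (g n)
  rw [div_le_iff₀ hp]
  nlinarith [pow_nonneg ht0 n]

lemma summable_Fr {b t Q : ℝ} (h : Dom b Q) (ht0 : 0 ≤ t) (ht : t ≤ 1/2) :
    Summable (fun n : ℕ => t ^ n / rp b Q (n+1)) := summable_aux h ht0 ht _

lemma Fr_nonneg {b t Q : ℝ} (h : Dom b Q) (ht0 : 0 ≤ t) : 0 ≤ Fr b t Q :=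
  tsum_nonneg (fun n => div_nonneg (pow_nonneg ht0 n) (h.rp_pos _).le)

lemma Fr_le_four {b t Q : ℝ} (h : Dom b Q) (ht0 : 0 ≤ t) (ht : t ≤ 1/2) :
    Fr b t Q ≤ 4 := by
  have h1 : Fr b t Q ≤ ∑' n : ℕ, 2 * t ^ n := by
    apply Summable.tsum_le_tsum (fun n => ?_) (summable_Fr h ht0 ht)
      ((summable_geometric_of_lt_one ht0 (by linarith)).mul_left 2)
    have h2 := h.rp_ge (n+1)
    have hp := h.rp_pos (n+1)
    rw [div_le_iff₀ hp]
    nlinarith [pow_nonneg ht0 n]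
  rw [tsum_mul_left, tsum_geometric_of_lt_one ht0 (by linarith)] at h1
  have : (1 - t)⁻¹ ≤ 2 := by
    rw [inv_le_comm₀ (by linarith) (by norm_num)]; linarith
  nlinarith [this]

/-- key series: `∑' t^n / rp b Q n = 1 + t * Fr b t Q`. -/
lemma key_shift {b t Q : ℝ} (h : Dom b Q) (ht0 : 0 ≤ t) (ht : t ≤ 1/2) :
    ∑' n : ℕ, t ^ n / rp b Q n = 1 + t * Fr b t Q := by
  have hs : Summable (fun n : ℕ => t ^ n / rp b Q n) := summable_aux h ht0 ht _
  rw [Summable.tsum_eq_zero_add hs]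
  have h0 : t ^ 0 / rp b Q 0 = 1 := by simp [rp]
  rw [h0]
  congr 1
  rw [Fr, ← tsum_mul_left]
  exact tsum_congr fun n => by rw [pow_succ']; ring

/-- R2 : `(1-b) * Fr b t Q = 1 + t * Fr (b*Q) t Q` -/
lemma R2 {b t Q : ℝ} (h : Dom b Q) (h' : Dom (b*Q) Q) (ht0 : 0 ≤ t) (ht : t ≤ 1/2) :
    (1 - b) * Fr b t Q = 1 + t * Fr (b*Q) t Q := by
  have hb1 : (1:ℝ) - b ≠ 0 := by have := h.ha'; have := h.ha; intro hc; nlinarith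
  have e1 : (1 - b) * Fr b t Q = ∑' n : ℕ, t ^ n / rp (b*Q) Q n := by
    rw [Fr, ← tsum_mul_left]
    exact tsum_congr fun n => by
      rw [rp_succ' b Q n, ← mul_div_assoc, mul_div_mul_left _ _ hb1]
  rw [e1, key_shift h' ht0 ht]

/-- R1 : `(1-t) * Fr b t Q = 1 + b * Fr b (t*Q) Q` -/
lemma R1 {b t Q : ℝ} (h : Dom b Q) (ht0 : 0 ≤ t) (ht : t ≤ 1/2) :
    (1 - t) * Fr b t Q = 1 + b * Fr b (t*Q) Q := by
  have hQ0 := h.hQ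
  have htQ0 : 0 ≤ t * Q := mul_nonneg ht0 hQ0
  have htQ : t * Q ≤ 1/2 := by nlinarith [h.hQ']
  have hsub : Fr b t Q - b * Fr b (t*Q) Q = ∑' n : ℕ, t ^ n / rp b Q n := by
    rw [Fr, Fr, ← tsum_mul_left, ← Summable.tsum_sub (summable_Fr h ht0 ht)
      ((summable_Fr h htQ0 htQ).mul_left b)]
    exact tsum_congr fun n => by
      have hp := h.rp_pos (n+1)
      have hp' := h.rp_pos n
      rw [rp_succ b Q n] at hp ⊢
      rw [mul_pow]
      have hq : (1:ℝ) - b * Q ^ n ≠ 0 := by have := h.term_le n; intro hc; linarith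
      field_simp
  have := key_shift h ht0 ht
  rw [this] at hsub
  linarith

lemma diag {s Q : ℝ} (h : Dom s Q) (h' : Dom (s*Q) Q) (hs2 : s ≤ 1/2) :
    (1 - s)^2 * Fr s s Q = 1 + s^2 * Q * Fr (s*Q) (s*Q) Q := by
  have hQ0 := h.hQ
  have hsQ0 : 0 ≤ s * Q := mul_nonneg h.ha hQ0
  have hsQ : s * Q ≤ 1/2 := by nlinarith [h.hQ', h.ha]
  have e1 := R1 h h.ha hs2
  have e2 := R2 h h' hsQ0 hsQ
  linear_combination (1 - s) * e1 + s * e2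

lemma dom_x {x : ℝ} (hx0 : 0 ≤ x) (hx8 : x ≤ 1/8) (m : ℕ) :
    Dom (x^(2*m+1)) (x^2) := by
  have h1 : x ^ (2*m+1) ≤ x ^ 1 :=
    pow_le_pow_of_le_one hx0 (by linarith) (by omega)
  rw [pow_one] at h1
  exact ⟨pow_nonneg hx0 _, by linarith, sq_nonneg x, by nlinarith⟩

lemma pow_shift (x : ℝ) (m : ℕ) : x^(2*m+1) * x^2 = x^(2*(m+1)+1) := by
  rw [← pow_add]
  congr 1

noncomputable def u (x : ℝ) (m : ℕ) : ℝ := Fr (x^(2*m+1)) (x^(2*m+1)) (x^2)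

lemma xpow_le {x : ℝ} (hx0 : 0 ≤ x) (hx8 : x ≤ 1/8) (m : ℕ) : x^(2*m+1) ≤ 1/2 := by
  have h1 : x ^ (2*m+1) ≤ x ^ 1 :=
    pow_le_pow_of_le_one hx0 (by linarith) (by omega)
  rw [pow_one] at h1; linarith

lemma u_nonneg {x : ℝ} (hx0 : 0 ≤ x) (hx8 : x ≤ 1/8) (m : ℕ) : 0 ≤ u x m :=
  Fr_nonneg (dom_x hx0 hx8 m) (pow_nonneg hx0 _)

lemma u_le_four {x : ℝ} (hx0 : 0 ≤ x) (hx8 : x ≤ 1/8) (m : ℕ) : u x m ≤ 4 :=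
  Fr_le_four (dom_x hx0 hx8 m) (pow_nonneg hx0 _) (xpow_le hx0 hx8 m)

lemma u_rec {x : ℝ} (hx0 : 0 ≤ x) (hx8 : x ≤ 1/8) (m : ℕ) :
    (1 - x^(2*m+1))^2 * u x m = 1 + x^(4*m+4) * u x (m+1) := by
  have hd := dom_x hx0 hx8 m
  have hd' : Dom (x^(2*m+1) * x^2) (x^2) := by
    rw [pow_shift]; exact dom_x hx0 hx8 (m+1)
  have := diag hd hd' (xpow_le hx0 hx8 m)
  rw [pow_shift] at this
  rw [u, u, this]
  congr 1
  rw [← pow_mul, ← pow_add]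
  congr 1
  ring

lemma one_sub_ne {x : ℝ} (hx0 : 0 ≤ x) (hx8 : x ≤ 1/8) (m : ℕ) :
    (1:ℝ) - x^(2*m+1) ≠ 0 := by
  have := xpow_le hx0 hx8 m
  intro hc; linarith

lemma rp_succ_x (x : ℝ) (M : ℕ) :
    rp x (x^2) (M+1) = rp x (x^2) M * (1 - x^(2*M+1)) := by
  rw [rp_succ]
  congr 2
  rw [← pow_mul, ← pow_succ']

lemma u_expand {x : ℝ} (hx0 : 0 ≤ x) (hx8 : x ≤ 1/8) (M : ℕ) :
    u x 0 = (∑ m ∈ Finset.range M, x^(2*m*(m+1)) / (rp x (x^2) (m+1))^2)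
      + x^(2*M*(M+1)) / (rp x (x^2) M)^2 * u x M := by
  induction M with
  | zero => simp [rp]
  | succ M ih =>
    rw [ih, Finset.sum_range_succ]
    have hP : rp x (x^2) M ≠ 0 := by
      simpa using (Dom.rp_pos (dom_x hx0 hx8 0) M).ne'
    have hP1 : rp x (x^2) (M+1) ≠ 0 := by
      simpa using (Dom.rp_pos (dom_x hx0 hx8 0) (M+1)).ne'
    have hc : (1:ℝ) - x^(2*M+1) ≠ 0 := one_sub_ne hx0 hx8 M
    have hrec := u_rec hx0 hx8 M
    have hrp1 := rp_succ_x x M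
    have hexp : x^(2*(M+1)*(M+2)) = x^(2*M*(M+1)) * x^(4*M+4) := by
      rw [← pow_add]; congr 1; ring
    have hexp' : x^(2*(M+1)*((M+1)+1)) = x^(2*M*(M+1)) * x^(4*M+4) := hexp
    rw [add_assoc]
    congr 1
    rw [hexp', hrp1]
    field_simp
    ring_nf
    ring_nf at hrec
    linear_combination (x^(2*M*(M+1))) * hrec

lemma dom_x0 {x : ℝ} (hx0 : 0 ≤ x) (hx8 : x ≤ 1/8) : Dom x (x^2) := by
  have := dom_x hx0 hx8 0
  simpa using this

noncomputable def omr (x : ℝ) : ℝ := ∑' n : ℕ, x^(2*n*(n+1)) / (rp x (x^2) (n+1))^2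

lemma om_term_le {x : ℝ} (hx0 : 0 ≤ x) (hx8 : x ≤ 1/8) (n : ℕ) :
    x^(2*n*(n+1)) / (rp x (x^2) (n+1))^2 ≤ 4 * x^(2*n*(n+1)) := by
  have h2 := (dom_x0 hx0 hx8).rp_ge (n+1)
  have hp := (dom_x0 hx0 hx8).rp_pos (n+1)
  rw [div_le_iff₀ (by positivity)]
  nlinarith [pow_nonneg hx0 (2*n*(n+1)), mul_le_mul h2 h2 (by norm_num) hp.le]

lemma om_term_nonneg {x : ℝ} (hx0 : 0 ≤ x) (hx8 : x ≤ 1/8) (n : ℕ) :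
    0 ≤ x^(2*n*(n+1)) / (rp x (x^2) (n+1))^2 := by
  have hp := (dom_x0 hx0 hx8).rp_pos (n+1)
  positivity

lemma summable_om {x : ℝ} (hx0 : 0 ≤ x) (hx8 : x ≤ 1/8) :
    Summable (fun n : ℕ => x^(2*n*(n+1)) / (rp x (x^2) (n+1))^2) := by
  apply Summable.of_nonneg_of_le (om_term_nonneg hx0 hx8) (fun n => ?_)
    ((summable_geometric_of_lt_one hx0 (by linarith)).mul_left 4)
  refine le_trans (om_term_le hx0 hx8 n) ?_
  have : x^(2*n*(n+1)) ≤ x^n :=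
    pow_le_pow_of_le_one hx0 (by linarith) (by nlinarith)
  linarith

lemma om_tail {x : ℝ} (hx0 : 0 ≤ x) (hx8 : x ≤ 1/8) (M : ℕ) :
    omr x - (∑ m ∈ Finset.range M, x^(2*m*(m+1)) / (rp x (x^2) (m+1))^2)
      ≤ 8 * x^(2*M*(M+1)) ∧
    0 ≤ omr x - (∑ m ∈ Finset.range M, x^(2*m*(m+1)) / (rp x (x^2) (m+1))^2) := by
  set f : ℕ → ℝ := fun n => x ^ (2*n*(n+1)) / (rp x (x^2) (n+1))^2 with hf
  have hsum : Summable f := summable_om hx0 hx8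
  have hsum' : Summable (fun n => f (n + M)) := (summable_nat_add_iff M).mpr hsum
  have key : ∑ i ∈ Finset.range M, f i + ∑' i, f (i + M) = ∑' i, f i :=
    Summable.sum_add_tsum_nat_add M hsum
  have homr : omr x = ∑' i, f i := rfl
  have hb : ∀ n : ℕ, f (n + M) ≤ 4 * x^(2*M*(M+1)) * x^n := by
    intro n
    refine le_trans (om_term_le hx0 hx8 (n+M)) ?_
    have h1 : x^(2*(n+M)*((n+M)+1)) ≤ x^(2*M*(M+1)+n) :=
      pow_le_pow_of_le_one hx0 (by linarith) (by nlinarith)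
    rw [pow_add] at h1
    nlinarith [pow_nonneg hx0 (2*(n+M)*((n+M)+1))]
  have hgeo : Summable (fun n : ℕ => 4 * x^(2*M*(M+1)) * x^n) :=
    (summable_geometric_of_lt_one hx0 (by linarith)).mul_left _
  have htail : ∑' n, f (n + M) ≤ 8 * x^(2*M*(M+1)) := by
    have h2 : ∑' n, f (n + M) ≤ ∑' n : ℕ, 4 * x^(2*M*(M+1)) * x^n :=
      Summable.tsum_le_tsum hb hsum' hgeo
    rw [tsum_mul_left, tsum_geometric_of_lt_one hx0 (by linarith)] at h2
    have h1 : (1-x)⁻¹ ≤ 2 := by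
      rw [inv_le_comm₀ (by linarith) (by norm_num)]; linarith
    nlinarith [pow_nonneg hx0 (2*M*(M+1))]
  have htail0 : 0 ≤ ∑' n, f (n + M) :=
    tsum_nonneg (fun n => om_term_nonneg hx0 hx8 (n+M))
  constructor
  · rw [homr, ← key]; simpa using htail
  · rw [homr, ← key]; simpa using htail0

lemma u0_omr {x : ℝ} (hx0 : 0 ≤ x) (hx8 : x ≤ 1/8) (M : ℕ) :
    |u x 0 - omr x| ≤ 24 * x^(2*M*(M+1)) := by
  have hexp := u_expand hx0 hx8 M
  obtain ⟨ht1, ht2⟩ := om_tail hx0 hx8 M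
  have hp := (dom_x0 hx0 hx8).rp_pos M
  have hge := (dom_x0 hx0 hx8).rp_ge M
  have hu0 := u_nonneg hx0 hx8 M
  have hu4 := u_le_four hx0 hx8 M
  have hxp : 0 ≤ x^(2*M*(M+1)) := pow_nonneg hx0 _
  have hterm : 0 ≤ x^(2*M*(M+1)) / (rp x (x^2) M)^2 * u x M ∧
      x^(2*M*(M+1)) / (rp x (x^2) M)^2 * u x M ≤ 16 * x^(2*M*(M+1)) := by
    constructor
    · positivity
    · rw [div_mul_eq_mul_div, div_le_iff₀ (by positivity)]
      nlinarith [mul_le_mul hge hge (by norm_num) hp.le]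
  rw [abs_le]
  constructor <;> nlinarith [hterm.1, hterm.2]

lemma dom_xk {x : ℝ} (hx0 : 0 ≤ x) (hx8 : x ≤ 1/8) {k : ℕ} (hk : 1 ≤ k) :
    Dom (x^(2*k-1)) (x^2) := by
  have h : 2*k-1 = 2*(k-1)+1 := by omega
  rw [h]; exact dom_x hx0 hx8 (k-1)

noncomputable def Frk (k : ℕ) (x : ℝ) : ℝ :=
  ∑' n : ℕ, rp (x^(2*k-1)) (x^2) n * x^(n+1) / rp x (x^2) (n+1)

lemma u0_eq {x : ℝ} (hx0 : 0 ≤ x) (hx8 : x ≤ 1/8) :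
    x * u x 0 = ∑' n : ℕ, x^(n+1) / rp x (x^2) (n+1) := by
  rw [u, Fr, ← tsum_mul_left]
  apply tsum_congr fun n => ?_
  norm_num
  rw [pow_succ']
  ring

lemma summable_Frk_aux {x : ℝ} (hx0 : 0 ≤ x) (hx8 : x ≤ 1/8) {k : ℕ} (hk : 1 ≤ k) :
    Summable (fun n : ℕ => rp (x^(2*k-1)) (x^2) n * x^(n+1) / rp x (x^2) (n+1)) := by
  have hd := dom_x0 hx0 hx8
  have hdk := dom_xk hx0 hx8 hk
  apply Summable.of_nonneg_of_le
    (fun n => by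
      have h1 := hdk.rp_pos n
      have h2 := hd.rp_pos (n+1)
      positivity)
    (fun n => ?_)
    ((summable_geometric_of_lt_one hx0 (by linarith)).mul_left 2)
  have h1 := hdk.rp_le_one n
  have h1' := (hdk.rp_pos n).le
  have h2 := hd.rp_ge (n+1)
  have h2' := hd.rp_pos (n+1)
  rw [div_le_iff₀ h2']
  have hxn : x^(n+1) ≤ x^n := pow_le_pow_of_le_one hx0 (by linarith) (by omega)
  nlinarith [pow_nonneg hx0 n, pow_nonneg hx0 (n+1)]

lemma summable_fr1 {x : ℝ} (hx0 : 0 ≤ x) (hx8 : x ≤ 1/8) :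
    Summable (fun n : ℕ => x^(n+1) / rp x (x^2) (n+1)) := by
  have := summable_Fr (dom_x0 hx0 hx8) hx0 (by linarith)
  have h2 := this.mul_left x
  apply h2.congr
  intro n
  rw [pow_succ']
  ring

lemma Frk_bound {x : ℝ} (hx0 : 0 ≤ x) (hx8 : x ≤ 1/8) {k : ℕ} (hk : 1 ≤ k) :
    |Frk k x - x * u x 0| ≤ 8 * x^(2*k) := by
  have hd := dom_x0 hx0 hx8
  have hdk := dom_xk hx0 hx8 hk
  rw [u0_eq hx0 hx8, Frk,
    ← Summable.tsum_sub (summable_Frk_aux hx0 hx8 hk) (summable_fr1 hx0 hx8)]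
  have hb : ∀ n : ℕ, |rp (x^(2*k-1)) (x^2) n * x^(n+1) / rp x (x^2) (n+1)
      - x^(n+1) / rp x (x^2) (n+1)| ≤ 4 * x^(2*k) * x^n := by
    intro n
    have h2 := hd.rp_ge (n+1)
    have h2' := hd.rp_pos (n+1)
    have key := hdk.rp_sub_one_abs n
    have e1 : rp (x^(2*k-1)) (x^2) n * x^(n+1) / rp x (x^2) (n+1)
        - x^(n+1) / rp x (x^2) (n+1)
        = (rp (x^(2*k-1)) (x^2) n - 1) * (x^(n+1) / rp x (x^2) (n+1)) := by
      field_simp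
    rw [e1, abs_mul]
    have hfrac : |x^(n+1) / rp x (x^2) (n+1)| ≤ 2 * x^(n+1) := by
      rw [abs_div, abs_of_nonneg (pow_nonneg hx0 (n+1)), abs_of_nonneg h2'.le,
        div_le_iff₀ h2']
      nlinarith [pow_nonneg hx0 (n+1)]
    have hmul : x^(2*k-1) * x^(n+1) = x^(2*k) * x^n := by
      rw [← pow_add, ← pow_add]; congr 1; omega
    calc |rp (x^(2*k-1)) (x^2) n - 1| * |x^(n+1) / rp x (x^2) (n+1)|
        ≤ (2 * x^(2*k-1)) * (2 * x^(n+1)) := by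
          apply mul_le_mul key hfrac (abs_nonneg _) (by positivity)
      _ = 4 * x^(2*k) * x^n := by
          rw [show (2*x^(2*k-1))*(2*x^(n+1)) = 4*(x^(2*k-1)*x^(n+1)) from by ring, hmul]
          ring
  set g : ℕ → ℝ := fun n => rp (x^(2*k-1)) (x^2) n * x^(n+1) / rp x (x^2) (n+1)
    - x^(n+1) / rp x (x^2) (n+1) with hg
  have hgeo : Summable (fun n : ℕ => 4 * x^(2*k) * x^n) :=
    (summable_geometric_of_lt_one hx0 (by linarith)).mul_left _
  have hb' : ∀ n, ‖g n‖ ≤ 4 * x^(2*k) * x^n := fun n => by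
    rw [Real.norm_eq_abs]; exact hb n
  have hsg : Summable (fun n => ‖g n‖) :=
    Summable.of_nonneg_of_le (fun n => norm_nonneg _) hb' hgeo
  have h0 : ‖∑' n, g n‖ ≤ ∑' n, ‖g n‖ := norm_tsum_le_tsum_norm hsg
  rw [Real.norm_eq_abs] at h0
  have h1 : ∑' n, ‖g n‖ ≤ ∑' n : ℕ, 4 * x^(2*k) * x^n := Summable.tsum_le_tsum hb' hsg hgeo
  rw [tsum_mul_left, tsum_geometric_of_lt_one hx0 (by linarith)] at h1
  have h2 : (1-x)⁻¹ ≤ 2 := by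
    rw [inv_le_comm₀ (by linarith) (by norm_num)]; linarith
  nlinarith [pow_nonneg hx0 (2*k), h0, h1]

lemma main_real {x : ℝ} (hx0 : 0 < x) (hx8 : x ≤ 1/8) {k N : ℕ} (hk : N+1 ≤ k) :
    |Frk k x - x * omr x| ≤ 32 * x^(N+1) := by
  have hx0' := hx0.le
  have hk1 : 1 ≤ k := by omega
  have h1 := Frk_bound hx0' hx8 hk1
  have h2 := u0_omr hx0' hx8 N
  have h3 : x^(2*k) ≤ x^(N+1) :=
    pow_le_pow_of_le_one hx0' (by linarith) (by omega)
  have h4 : x * x^(2*N*(N+1)) ≤ x^(N+1) := by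
    rw [← pow_succ']
    apply pow_le_pow_of_le_one hx0' (by linarith) (by nlinarith)
  have h5 : |x * u x 0 - x * omr x| ≤ 24 * x^(N+1) := by
    rw [← mul_sub, abs_mul, abs_of_nonneg hx0']
    calc x * |u x 0 - omr x| ≤ x * (24 * x^(2*N*(N+1))) := by nlinarith
      _ ≤ 24 * x^(N+1) := by nlinarith
  calc |Frk k x - x * omr x|
      ≤ |Frk k x - x * u x 0| + |x * u x 0 - x * omr x| := abs_sub_le _ _ _
    _ ≤ 8 * x^(2*k) + 24 * x^(N+1) := by linarith
    _ ≤ 32 * x^(N+1) := by nlinarith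

lemma Frk_pos {x : ℝ} (hx0 : 0 < x) (hx8 : x ≤ 1/8) {k : ℕ} (hk : 1 ≤ k) :
    0 < Frk k x := by
  have hd := dom_x0 hx0.le hx8
  have hdk := dom_xk hx0.le hx8 hk
  have h0 : 0 < rp (x^(2*k-1)) (x^2) 0 * x^(0+1) / rp x (x^2) (0+1) := by
    have := hdk.rp_pos 0
    have := hd.rp_pos 1
    positivity
  refine lt_of_lt_of_le h0 ?_
  apply Summable.le_tsum (summable_Frk_aux hx0.le hx8 hk) 0
  intro j _
  have h1 := hdk.rp_pos j
  have h2 := hd.rp_pos (j+1)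
  positivity

lemma omr_pos {x : ℝ} (hx0 : 0 < x) (hx8 : x ≤ 1/8) : 0 < omr x := by
  have hd := dom_x0 hx0.le hx8
  have h0 : 0 < x^(2*0*(0+1)) / (rp x (x^2) (0+1))^2 := by
    have := hd.rp_pos 1
    positivity
  refine lt_of_lt_of_le h0 ?_
  exact Summable.le_tsum (summable_om hx0.le hx8) 0
    (fun j _ => om_term_nonneg hx0.le hx8 j)

lemma qPoch_cast (a Q : ℝ) (n : ℕ) :
    qPoch (a : ℂ) (Q : ℂ) n = ((rp a Q n : ℝ) : ℂ) := by
  rw [qPoch, rp]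
  push_cast
  rfl

lemma pow_cast_c (x : ℝ) (m : ℕ) : ((x : ℂ)) ^ m = ((x ^ m : ℝ) : ℂ) := by push_cast; rfl

lemma F_cast (k : ℕ) (x : ℝ) : F k (x : ℂ) = ((Frk k x : ℝ) : ℂ) := by
  rw [F, Frk, Complex.ofReal_tsum]
  apply tsum_congr fun n => ?_
  rw [pow_cast_c x (2*k-1), pow_cast_c x 2, qPoch_cast, qPoch_cast]
  push_cast
  ring

lemma om_cast (x : ℝ) : (x : ℂ) * omegaMock (x : ℂ) = ((x * omr x : ℝ) : ℂ) := by
  rw [omegaMock, omr]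
  push_cast [Complex.ofReal_tsum]
  rw [← tsum_mul_left, ← tsum_mul_left]
  apply tsum_congr fun n => ?_
  rw [pow_cast_c x 2, qPoch_cast]

lemma coeff_bound {c : ℕ → ℂ} (hs : Summable (fun n : ℕ => c n * ((8⁻¹ : ℝ) : ℂ)^n)) :
    ∃ B : ℝ, 0 ≤ B ∧ ∀ i, ‖c i‖ ≤ B * 8^i := by
  have h1 : Filter.Tendsto (fun i => ‖c i * ((8⁻¹ : ℝ) : ℂ)^i‖) Filter.atTop (nhds 0) := by
    simpa using hs.tendsto_atTop_zero.norm
  obtain ⟨m, hm⟩ := Filter.eventually_atTop.mp (h1.eventually_lt_const one_pos)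
  refine ⟨(∑ i ∈ Finset.range m, ‖c i * ((8⁻¹ : ℝ) : ℂ)^i‖) + 1, by positivity, fun i => ?_⟩
  have hnorm : ‖c i * ((8⁻¹ : ℝ) : ℂ)^i‖ = ‖c i‖ * 8⁻¹^i := by
    rw [norm_mul, norm_pow, Complex.norm_real, Real.norm_eq_abs, abs_of_nonneg (by norm_num)]
  have hb : ‖c i * ((8⁻¹ : ℝ) : ℂ)^i‖ ≤ (∑ i ∈ Finset.range m, ‖c i * ((8⁻¹ : ℝ) : ℂ)^i‖) + 1 := by
    rcases lt_or_ge i m with h | h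
    · have := Finset.single_le_sum (f := fun i => ‖c i * ((8⁻¹ : ℝ) : ℂ)^i‖)
        (fun j _ => norm_nonneg _) (Finset.mem_range.mpr h)
      linarith
    · have := (hm i h).le
      have hsum : 0 ≤ ∑ i ∈ Finset.range m, ‖c i * ((8⁻¹ : ℝ) : ℂ)^i‖ :=
        Finset.sum_nonneg (fun j _ => norm_nonneg _)
      linarith
  rw [hnorm] at hb
  have h8 : (0:ℝ) < 8^i := by positivity
  have : ‖c i‖ * 8⁻¹^i * 8^i ≤ ((∑ i ∈ Finset.range m, ‖c i * ((8⁻¹ : ℝ) : ℂ)^i‖) + 1) * 8^i :=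
    mul_le_mul_of_nonneg_right hb h8.le
  calc ‖c i‖ = ‖c i‖ * 8⁻¹^i * 8^i := by
        rw [mul_assoc, ← mul_pow]
        norm_num
    _ ≤ _ := this

lemma vanish (e : ℕ → ℂ) (B C : ℝ) (hB0 : 0 ≤ B) (hC : 0 ≤ C) (N : ℕ)
    (hB : ∀ i, ‖e i‖ ≤ B * 8^i)
    (h : ∀ x : ℝ, 0 < x → x ≤ 1/16 → ‖∑' i, e i * (x:ℂ)^i‖ ≤ C * x^(N+1)) :
    ∀ n, n ≤ N → e n = 0 := by
  intro n
  induction n using Nat.strong_induction_on with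
  | _ n IH =>
    intro hn
    have key : ∀ x : ℝ, 0 < x → x ≤ 1/16 → ‖e n‖ ≤ (C + 2*B*8^(n+1)) * x := by
      intro x hx0 hx16
      have hx8 : (0:ℝ) ≤ 8*x := by linarith
      have hx12 : 8*x ≤ 1/2 := by linarith
      have hnorm : ∀ m i : ℕ, ‖e (i + m) * (x:ℂ)^i‖ ≤ (B * 8^m) * (8*x)^i := by
        intro m i
        rw [norm_mul, norm_pow, Complex.norm_real, Real.norm_eq_abs, abs_of_nonneg hx0.le]
        calc ‖e (i+m)‖ * x^i ≤ B * 8^(i+m) * x^i :=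
              mul_le_mul_of_nonneg_right (hB (i+m)) (by positivity)
          _ = (B * 8^m) * (8*x)^i := by rw [pow_add, mul_pow]; ring
      have hgeo : ∀ m : ℕ, Summable (fun i : ℕ => (B * 8^m) * (8*x)^i) := fun m =>
        (summable_geometric_of_lt_one hx8 (by linarith)).mul_left _
      have hsum1 : Summable (fun i => e (i + n) * (x:ℂ)^i) :=
        Summable.of_norm_bounded (hgeo n) (hnorm n)
      have hsum1' : Summable (fun i => e (i + (n+1)) * (x:ℂ)^i) :=
        Summable.of_norm_bounded (hgeo (n+1)) (hnorm (n+1))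
      have hsum : Summable (fun i => e i * (x:ℂ)^i) := by
        have := Summable.of_norm_bounded (hgeo 0) (hnorm 0)
        exact this.congr (fun i => by rw [Nat.add_zero])
      have split := Summable.sum_add_tsum_nat_add n hsum
      have hzero : ∑ i ∈ Finset.range n, e i * (x:ℂ)^i = 0 :=
        Finset.sum_eq_zero (fun i hi => by
          have hi' := Finset.mem_range.mp hi
          rw [IH i hi' (by omega), zero_mul])
      have hA : ∑' i, e (i + n) * (x:ℂ)^(i + n)
          = (x:ℂ)^n * ∑' i, e (i + n) * (x:ℂ)^i := by
        rw [← tsum_mul_left]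
        exact tsum_congr fun i => by rw [pow_add]; ring
      rw [hzero, zero_add, hA] at split
      -- bound on A
      have hxn : (0:ℝ) < x^n := by positivity
      have hAle : ‖∑' i, e (i + n) * (x:ℂ)^i‖ ≤ C * x := by
        have h1 : x^n * ‖∑' i, e (i + n) * (x:ℂ)^i‖ ≤ C * x^(N+1) := by
          have := h x hx0 hx16
          rw [← split, norm_mul, norm_pow, Complex.norm_real, Real.norm_eq_abs,
            abs_of_nonneg hx0.le] at this
          linarith
        have hNn : x^(N+1) = x^n * x^(N+1-n) := by
          rw [← pow_add]; congr 1; omega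
        rw [hNn, ← mul_assoc] at h1
        have h2 : ‖∑' i, e (i + n) * (x:ℂ)^i‖ ≤ C * x^(N+1-n) := by
          have := (mul_le_mul_iff_right₀ hxn).mp (by linarith : x^n * ‖∑' i, e (i + n) * (x:ℂ)^i‖ ≤ x^n * (C * x^(N+1-n)))
          linarith
        refine h2.trans ?_
        have : x^(N+1-n) ≤ x^1 := pow_le_pow_of_le_one hx0.le (by linarith) (by omega)
        rw [pow_one] at this
        nlinarith
      -- split off first term of A
      have hfirst := Summable.tsum_eq_zero_add hsum1
      have hshift : ∑' i, e ((i+1) + n) * (x:ℂ)^(i+1)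
          = (x:ℂ) * ∑' i, e (i + (n+1)) * (x:ℂ)^i := by
        rw [← tsum_mul_left]
        exact tsum_congr fun i => by
          rw [show (i+1) + n = i + (n+1) from by omega, pow_succ']
          ring
      rw [hshift] at hfirst
      simp only [Nat.zero_add, pow_zero, mul_one] at hfirst
      have hTle : ‖∑' i, e (i + (n+1)) * (x:ℂ)^i‖ ≤ 2 * (B * 8^(n+1)) := by
        have hsn : Summable (fun i => ‖e (i + (n+1)) * (x:ℂ)^i‖) :=
          Summable.of_nonneg_of_le (fun i => norm_nonneg _) (hnorm (n+1)) (hgeo (n+1))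
        calc ‖∑' i, e (i + (n+1)) * (x:ℂ)^i‖
            ≤ ∑' i, ‖e (i + (n+1)) * (x:ℂ)^i‖ := norm_tsum_le_tsum_norm hsn
          _ ≤ ∑' i : ℕ, (B * 8^(n+1)) * (8*x)^i :=
              Summable.tsum_le_tsum (hnorm (n+1)) hsn (hgeo (n+1))
          _ = (B * 8^(n+1)) * (1 - 8*x)⁻¹ := by
              rw [tsum_mul_left, tsum_geometric_of_lt_one hx8 (by linarith)]
          _ ≤ 2 * (B * 8^(n+1)) := by
              have h1 : (1-8*x)⁻¹ ≤ 2 := by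
                rw [inv_le_comm₀ (by linarith) (by norm_num)]; linarith
              have h2 := mul_le_mul_of_nonneg_left h1
                (show (0:ℝ) ≤ B * 8^(n+1) by positivity)
              linarith
      have : ‖e n‖ ≤ ‖∑' i, e (i + n) * (x:ℂ)^i‖
          + x * ‖∑' i, e (i + (n+1)) * (x:ℂ)^i‖ := by
        have h2 : e n = (∑' i, e (i + n) * (x:ℂ)^i)
            - (x:ℂ) * ∑' i, e (i + (n+1)) * (x:ℂ)^i := by
          rw [hfirst]; ring
        rw [h2]
        refine (norm_sub_le _ _).trans ?_
        rw [norm_mul, Complex.norm_real, Real.norm_eq_abs, abs_of_nonneg hx0.le]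
      have hpow8 : (0:ℝ) ≤ 8^(n+1) := by positivity
      nlinarith [this, hAle, hTle]
    -- conclude e n = 0
    by_contra h0
    have ha : 0 < ‖e n‖ := norm_pos_iff.mpr h0
    set D := C + 2*B*8^(n+1) with hD
    have hD0 : 0 ≤ D := by positivity
    set x := min (1/16 : ℝ) (‖e n‖ / (2*(D+1))) with hx
    have hx0 : 0 < x := lt_min (by norm_num) (by positivity)
    have hx16 : x ≤ 1/16 := min_le_left _ _
    have hx2 : x ≤ ‖e n‖ / (2*(D+1)) := min_le_right _ _
    have hkey : ‖e n‖ ≤ D * x := by rw [hD]; exact key x hx0 hx16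
    have hDx : D * x ≤ (D+1) * (‖e n‖ / (2*(D+1))) := by
      apply mul_le_mul (by linarith) hx2 hx0.le (by linarith)
    rw [mul_div_assoc'] at hDx
    have h3 : (D+1) * ‖e n‖ / (2*(D+1)) = ‖e n‖ / 2 := by
      rw [mul_comm, mul_div_assoc]
      congr 1
      rw [div_eq_iff (by linarith)]
      ring
    rw [h3] at hDx
    have hfin : ‖e n‖ ≤ ‖e n‖ / 2 := hkey.trans hDx
    linarith

/-- As `k → ∞`, the coefficients of `F_{k,1}(q)` stabilize coefficientwise to those of
`q·ω(q)`: for every `N` there is `K` such that for all `k ≥ K` the power-series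
coefficients of `F_{k,1}` and of `q·ω` agree up to degree `N`. -/
theorem stmt5 :
    ∀ N : ℕ, ∃ K : ℕ, ∀ k : ℕ, K ≤ k → ∀ c d : ℕ → ℂ,
      (∀ q : ℂ, ‖q‖ < 1 → F k q = ∑' n : ℕ, c n * q ^ n) →
      (∀ q : ℂ, ‖q‖ < 1 → q * omegaMock q = ∑' n : ℕ, d n * q ^ n) →
      ∀ n : ℕ, n ≤ N → c n = d n := by
  intro N
  refine ⟨N+1, fun k hk c d hc hd => ?_⟩
  have hk1 : 1 ≤ k := by omega
  have hnorm_lt : ∀ x : ℝ, 0 < x → x ≤ 1/8 → ‖(x:ℂ)‖ < 1 := by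
    intro x hx0 hx8
    rw [Complex.norm_real, Real.norm_eq_abs, abs_of_nonneg hx0.le]
    linarith
  have hsc : ∀ x : ℝ, 0 < x → x ≤ 1/8 → Summable (fun n : ℕ => c n * (x:ℂ)^n) := by
    intro x hx0 hx8
    have heq := hc _ (hnorm_lt x hx0 hx8)
    have hpos : F k (x:ℂ) ≠ 0 := by
      rw [F_cast]
      exact_mod_cast (Frk_pos hx0 hx8 hk1).ne'
    by_contra hns
    rw [tsum_eq_zero_of_not_summable hns] at heq
    exact hpos heq
  have hsd : ∀ x : ℝ, 0 < x → x ≤ 1/8 → Summable (fun n : ℕ => d n * (x:ℂ)^n) := by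
    intro x hx0 hx8
    have heq := hd _ (hnorm_lt x hx0 hx8)
    have hpos : (x:ℂ) * omegaMock (x:ℂ) ≠ 0 := by
      rw [om_cast]
      exact_mod_cast (mul_pos hx0 (omr_pos hx0 hx8)).ne'
    by_contra hns
    rw [tsum_eq_zero_of_not_summable hns] at heq
    exact hpos heq
  obtain ⟨Bc, hBc0, hBc⟩ := coeff_bound (hsc 8⁻¹ (by norm_num) (by norm_num))
  obtain ⟨Bd, hBd0, hBd⟩ := coeff_bound (hsd 8⁻¹ (by norm_num) (by norm_num))
  have hest : ∀ x : ℝ, 0 < x → x ≤ 1/16 →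
      ‖∑' i, (c i - d i) * (x:ℂ)^i‖ ≤ 32 * x^(N+1) := by
    intro x hx0 hx16
    have hx8 : x ≤ 1/8 := by linarith
    have hnx := hnorm_lt x hx0 hx8
    have h1 : ∑' i, (c i - d i) * (x:ℂ)^i
        = (∑' i, c i * (x:ℂ)^i) - ∑' i, d i * (x:ℂ)^i := by
      rw [← Summable.tsum_sub (hsc x hx0 hx8) (hsd x hx0 hx8)]
      exact tsum_congr fun i => by ring
    rw [h1, ← hc _ hnx, ← hd _ hnx, F_cast, om_cast, ← Complex.ofReal_sub,
      Complex.norm_real, Real.norm_eq_abs]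
    exact main_real hx0 hx8 hk
  intro n hn
  have hv := vanish (fun i => c i - d i) (Bc+Bd) 32 (by positivity) (by norm_num) N
    (fun i => by
      have h1 := hBc i
      have h2 := hBd i
      have h3 : (Bc+Bd) * 8^i = Bc * 8^i + Bd * 8^i := by ring
      calc ‖c i - d i‖ ≤ ‖c i‖ + ‖d i‖ := norm_sub_le _ _
        _ ≤ (Bc+Bd) * 8^i := by rw [h3]; linarith)
    hest n hn
  exact sub_eq_zero.mp hv
end

section
/- For every integer k ≥ 3, F_{k,1}(q) = (1 / (q;q^2)_{k-1}) · Σ_{n=0}^{k-2} [k−2 choose n]_{q^2} · (−1)^n · q^{(n+1)^2} / (1 − q^{2n+1}), where [N choose m]_{q^2} denotes the Gaussian binomial coefficient in base q^2 and F_{k,1}(q) := Σ_{n≥0} (q^{2k-1};q^2)_n · q^{n+1} / (q;q^2)_{n+1}. -/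
open Finset

/-- `(q;q)_n`. -/
noncomputable def pochQ (q : ℂ) (n : ℕ) : ℂ := ∏ j ∈ Finset.range n, (1 - q ^ (j + 1))

/-- Gaussian binomial coefficient `[N choose m]_q`. -/
noncomputable def gauss (q : ℂ) (N m : ℕ) : ℂ :=
  if m ≤ N then pochQ q N / (pochQ q m * pochQ q (N - m)) else 0

/-! ### Auxiliary lemmas -/

lemma one_sub_pow_ne {q : ℂ} (hq : ‖q‖ < 1) {m : ℕ} (hm : m ≠ 0) : 1 - q ^ m ≠ 0 := by
  intro h
  have h1 : q ^ m = 1 := by linear_combination -h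
  have : ‖q ^ m‖ < 1 := by
    rw [norm_pow]; exact pow_lt_one₀ (norm_nonneg _) hq hm
  rw [h1] at this; simp at this

lemma pochQ_zero (q : ℂ) : pochQ q 0 = 1 := by simp [pochQ]

lemma pochQ_ne_zero {q : ℂ} (hq : ∀ m : ℕ, m ≠ 0 → 1 - q ^ m ≠ 0) (n : ℕ) :
    pochQ q n ≠ 0 := by
  rw [pochQ]
  exact Finset.prod_ne_zero_iff.2 fun j _ => hq (j + 1) (by omega)

lemma pochQ_succ (q : ℂ) (n : ℕ) : pochQ q (n + 1) = pochQ q n * (1 - q ^ (n + 1)) := by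
  rw [pochQ, pochQ, Finset.prod_range_succ]

lemma gauss_zero_right {q : ℂ} (hq : ∀ m : ℕ, m ≠ 0 → 1 - q ^ m ≠ 0) (N : ℕ) :
    gauss q N 0 = 1 := by
  rw [gauss, if_pos (Nat.zero_le _)]
  simp [pochQ_zero, div_self (pochQ_ne_zero hq N)]

/-- Pascal identity for Gaussian binomials. -/
lemma gauss_pascal {q : ℂ} (hq : ∀ m : ℕ, m ≠ 0 → 1 - q ^ m ≠ 0) (N m : ℕ) :
    gauss q (N + 1) (m + 1) = gauss q N (m + 1) + q ^ (N - m) * gauss q N m := by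
  rcases lt_trichotomy m N with h | rfl | h
  · -- m + 1 ≤ N
    obtain ⟨a, rfl⟩ : ∃ a, N = m + 1 + a := ⟨N - (m+1), by omega⟩
    rw [gauss, gauss, gauss, if_pos (by omega), if_pos (by omega), if_pos (by omega)]
    have e1 : m + 1 + a + 1 - (m + 1) = a + 1 := by omega
    have e2 : m + 1 + a - (m + 1) = a := by omega
    have e3 : m + 1 + a - m = a + 1 := by omega
    rw [e1, e2, e3]
    rw [pochQ_succ q (m + 1 + a), pochQ_succ q a, pochQ_succ q m]
    have hPm := pochQ_ne_zero hq m
    have hPa := pochQ_ne_zero hq a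
    have hPN := pochQ_ne_zero hq (m + 1 + a)
    have h1 : (1 : ℂ) - q ^ (m + 1) ≠ 0 := hq _ (by omega)
    have h2 : (1 : ℂ) - q ^ (a + 1) ≠ 0 := hq _ (by omega)
    field_simp
    ring
  · -- m = N
    rw [gauss, gauss, gauss, if_pos (by omega), if_neg (by omega), if_pos le_rfl]
    simp [Nat.sub_self, pochQ_zero, div_self (pochQ_ne_zero hq (m + 1)),
      div_self (pochQ_ne_zero hq m)]
  · -- m > N
    rw [gauss, gauss, gauss, if_neg (by omega), if_neg (by omega), if_neg (by omega)]
    ring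

lemma qPoch_succ (a q : ℂ) (n : ℕ) : qPoch a q (n + 1) = qPoch a q n * (1 - a * q ^ n) := by
  rw [qPoch, qPoch, Finset.prod_range_succ]

lemma gauss_of_gt {q : ℂ} {N m : ℕ} (h : N < m) : gauss q N m = 0 := by
  rw [gauss, if_neg (by omega)]

/-- q-binomial theorem for finite q-Pochhammer products. -/
lemma qbinom {q : ℂ} (hq : ∀ m : ℕ, m ≠ 0 → 1 - q ^ m ≠ 0) (N : ℕ) (x : ℂ) :
    qPoch x q N
      = ∑ m ∈ Finset.range (N + 1),
          gauss q N m * (-1) ^ m * q ^ (m.choose 2) * x ^ m := by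
  induction N generalizing x with
  | zero => simp [qPoch, gauss_zero_right hq]
  | succ N ih =>
    set g : ℕ → ℂ := fun m => gauss q N m * (-1) ^ m * q ^ (m.choose 2) * x ^ m with hg
    have hg0 : g 0 = 1 := by simp [hg, gauss_zero_right hq]
    have hgN : g (N + 1) = 0 := by simp [hg, gauss_of_gt (by omega : N < N + 1)]
    have hsum : ∑ m ∈ Finset.range (N + 1), g (m + 1)
        = (∑ m ∈ Finset.range (N + 1), g m) - 1 := by
      have h1 := Finset.sum_range_succ' g (N + 1)
      have h2 := Finset.sum_range_succ g (N + 1)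
      rw [hg0] at h1; rw [hgN] at h2
      linear_combination h2 - h1
    have key : ∀ m ∈ Finset.range (N + 1),
        gauss q (N + 1) (m + 1) * (-1) ^ (m + 1) * q ^ ((m + 1).choose 2) * x ^ (m + 1)
          = g (m + 1) + g m * (-(x * q ^ N)) := by
      intro m hm
      have hm' : m < N + 1 := Finset.mem_range.1 hm
      obtain ⟨a, rfl⟩ : ∃ a, N = m + a := ⟨N - m, by omega⟩
      have hc : (m + 1).choose 2 = m + m.choose 2 := by
        rw [Nat.choose_succ_succ']; simp [Nat.choose_one_right]
      simp only [hg]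
      rw [gauss_pascal hq, show m + a - m = a from by omega, hc]
      ring
    rw [qPoch_succ, ih x, Finset.sum_range_succ' _ (N + 1), Finset.sum_congr rfl key,
      Finset.sum_add_distrib, hsum, ← Finset.sum_mul, gauss_zero_right hq]
    norm_num
    ring

lemma qPoch_q_ne_zero {q : ℂ} (hq : ‖q‖ < 1) (n : ℕ) : qPoch q (q ^ 2) n ≠ 0 := by
  rw [qPoch]
  refine Finset.prod_ne_zero_iff.2 fun j _ => ?_
  rw [show q * (q ^ 2) ^ j = q ^ (2 * j + 1) from by ring]
  exact one_sub_pow_ne hq (by omega)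

lemma qPoch_shift (q : ℂ) (a b : ℕ) :
    qPoch q (q ^ 2) (a + b) = qPoch q (q ^ 2) a * qPoch (q ^ (2 * a + 1)) (q ^ 2) b := by
  rw [qPoch, qPoch, qPoch, Finset.prod_range_add]
  congr 1
  refine Finset.prod_congr rfl fun j _ => ?_
  congr 1
  ring

lemma two_choose_two : ∀ m : ℕ, 2 * Nat.choose m 2 = m * (m - 1)
  | 0 => rfl
  | (m + 1) => by
    rw [Nat.choose_succ_succ', Nat.choose_one_right, Nat.mul_add, two_choose_two m]
    cases m with
    | zero => rfl
    | succ t => simp only [Nat.add_sub_cancel]; ring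

lemma step1 {q : ℂ} (hq : ‖q‖ < 1) (K n : ℕ) :
    qPoch (q ^ (2 * K + 3)) (q ^ 2) n * q ^ (n + 1) / qPoch q (q ^ 2) (n + 1)
      = (qPoch q (q ^ 2) (K + 1))⁻¹ * (q ^ (n + 1) * qPoch (q ^ (2 * n + 3)) (q ^ 2) K) := by
  rw [inv_mul_eq_div, div_eq_div_iff (qPoch_q_ne_zero hq (n + 1)) (qPoch_q_ne_zero hq (K + 1))]
  have h1 := qPoch_shift q (K + 1) n
  have h2 := qPoch_shift q (n + 1) K
  rw [show K + 1 + n = n + 1 + K from by omega] at h1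
  rw [show 2 * K + 3 = 2 * (K + 1) + 1 from by ring, show 2 * n + 3 = 2 * (n + 1) + 1 from by ring]
  linear_combination q ^ (n + 1) * h2 - q ^ (n + 1) * h1

/-- For `k ≥ 3`,
`F_{k,1}(q) = (1/(q;q^2)_{k-1}) Σ_{n=0}^{k-2} [k−2, n]_{q^2} (−1)^n q^{(n+1)^2}/(1−q^{2n+1})`. -/
theorem stmt7 (k : ℕ) (hk : 3 ≤ k) (q : ℂ) (hq : ‖q‖ < 1) :
    F k q = 1 / qPoch q (q ^ 2) (k - 1) *
      ∑ n ∈ Finset.range (k - 1),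
        gauss (q ^ 2) (k - 2) n * (-1) ^ n * q ^ ((n + 1) ^ 2) / (1 - q ^ (2 * n + 1)) := by
  obtain ⟨K, rfl⟩ : ∃ K, k = K + 2 := ⟨k - 2, by omega⟩
  have hq2 : ∀ m : ℕ, m ≠ 0 → 1 - (q ^ 2) ^ m ≠ 0 := fun m hm => by
    rw [← pow_mul]; exact one_sub_pow_ne hq (by omega)
  rw [show K + 2 - 1 = K + 1 from by omega, show K + 2 - 2 = K from by omega, F,
    show 2 * (K + 2) - 1 = 2 * K + 3 from by omega]
  have hterm : ∀ n : ℕ,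
      qPoch (q ^ (2 * K + 3)) (q ^ 2) n * q ^ (n + 1) / qPoch q (q ^ 2) (n + 1)
        = (qPoch q (q ^ 2) (K + 1))⁻¹ * ∑ m ∈ Finset.range (K + 1),
            gauss (q ^ 2) K m * (-1) ^ m * q ^ ((m + 1) ^ 2) * (q ^ (2 * m + 1)) ^ n := by
    intro n
    rw [step1 hq K n, qbinom hq2 K (q ^ (2 * n + 3)), Finset.mul_sum]
    congr 1
    refine Finset.sum_congr rfl fun m hm => ?_
    have hE : q ^ (n + 1) * ((q ^ 2) ^ (m.choose 2) * (q ^ (2 * n + 3)) ^ m)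
        = q ^ ((m + 1) ^ 2) * (q ^ (2 * m + 1)) ^ n := by
      rw [← pow_mul, ← pow_mul, ← pow_mul, two_choose_two, ← pow_add, ← pow_add]
      rcases m with _ | t
      · ring
      · simp only [Nat.add_sub_cancel]; ring
    linear_combination gauss (q ^ 2) K m * (-1) ^ m * hE
  rw [tsum_congr hterm, tsum_mul_left]
  have hsummable : ∀ m ∈ Finset.range (K + 1),
      Summable (fun n : ℕ =>
        gauss (q ^ 2) K m * (-1) ^ m * q ^ ((m + 1) ^ 2) * (q ^ (2 * m + 1)) ^ n) :=
    fun m _ => (summable_geometric_of_norm_lt_one (x := q ^ (2 * m + 1))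
      (by rw [norm_pow]; exact pow_lt_one₀ (norm_nonneg _) hq (by omega))).mul_left _
  rw [Summable.tsum_finsetSum hsummable, one_div]
  congr 1
  refine Finset.sum_congr rfl fun m hm => ?_
  rw [tsum_mul_left, tsum_geometric_of_norm_lt_one
    (by rw [norm_pow]; exact pow_lt_one₀ (norm_nonneg _) hq (by omega)), div_eq_mul_inv]
end
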